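/- arXiv:2103.15724 — 5 statements merged into one kernel-verified Lean document; each statement's English description precedes it below -/
import Mathlib

section
/- Let V be a finite set, f : 2^V → ℝ a symmetric submodular function, R ⊆ V, and let (S, T) be a partition of R (S ∪ T = R, S ∩ T = ∅) with v ∈ S. Let B ⊆ V satisfy S ⊆ B, B ∩ T = ∅, and f(B) ≤ f(B') for every B' ⊆ V with S ⊆ B' and B' ∩ T = ∅. Let S_v ⊆ V satisfy S_v ∩ R = {v}, f(S_v) ≤ f(A) for every A ⊆ V with A ∩ R = {v}, and suppose S_v is inclusion-wise minimal among all such minimizers (no proper subset A ⊊ S_v with A ∩ R = {v} attains the same minimum value). Then S_v ⊆ B. -/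
/-- If `(S, T)` is a partition of `R` with `v ∈ S`, `B` is a minimizer of a
symmetric submodular function `f` among sets containing `S` and disjoint
from `T`, and `S_v` is a minimum `v`-isolating set (inclusion-wise minimal
among minimizers), then `S_v ⊆ B`. -/
theorem stmt_2 {V : Type*} [Fintype V] [DecidableEq V]
    (f : Finset V → ℝ)
    (hsub : ∀ A B : Finset V, f A + f B ≥ f (A ∪ B) + f (A ∩ B))
    (hsym : ∀ A : Finset V, f A = f Aᶜ)
    (R S T : Finset V) (hpart : S ∪ T = R) (hdisj : S ∩ T = ∅)
    (v : V) (hv : v ∈ S)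
    (B : Finset V) (hSB : S ⊆ B) (hBT : B ∩ T = ∅)
    (hBmin : ∀ B' : Finset V, S ⊆ B' → B' ∩ T = ∅ → f B ≤ f B')
    (Sv : Finset V) (hSvR : Sv ∩ R = {v})
    (hSvmin : ∀ A : Finset V, A ∩ R = {v} → f Sv ≤ f A)
    (hSvminimal : ∀ A : Finset V, A ⊂ Sv → A ∩ R = {v} → f A ≠ f Sv) :
    Sv ⊆ B := by
  have hvB : v ∈ B := hSB hv
  have hvT : v ∉ T := by
    intro hvT
    have : v ∈ S ∩ T := Finset.mem_inter.2 ⟨hv, hvT⟩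
    rw [hdisj] at this
    exact absurd this (Finset.notMem_empty v)
  -- members of Sv ∩ R are exactly v
  have hmem : ∀ x, x ∈ Sv → x ∈ R → x = v := by
    intro x hxS hxR
    have : x ∈ Sv ∩ R := Finset.mem_inter.2 ⟨hxS, hxR⟩
    rw [hSvR] at this
    exact Finset.mem_singleton.1 this
  have h1 : (Sv ∩ B) ∩ R = {v} := by
    ext x
    simp only [Finset.mem_inter, Finset.mem_singleton]
    constructor
    · rintro ⟨⟨hxS, _⟩, hxR⟩; exact hmem x hxS hxR
    · rintro rfl
      have hvSv : x ∈ Sv := by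
        have : x ∈ Sv ∩ R := hSvR ▸ Finset.mem_singleton_self x
        exact (Finset.mem_inter.1 this).1
      exact ⟨⟨hvSv, hvB⟩, hpart ▸ Finset.mem_union_left T hv⟩
  have h2 : (Sv ∪ B) ∩ T = ∅ := by
    ext x
    simp only [Finset.mem_inter, Finset.mem_union, Finset.notMem_empty, iff_false]
    rintro ⟨hx, hxT⟩
    have hxR : x ∈ R := hpart ▸ Finset.mem_union_right S hxT
    rcases hx with hxS | hxB
    · exact hvT ((hmem x hxS hxR) ▸ hxT)
    · have : x ∈ B ∩ T := Finset.mem_inter.2 ⟨hxB, hxT⟩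
      rw [hBT] at this
      exact Finset.notMem_empty x this
  have hb : f B ≤ f (Sv ∪ B) := hBmin _ (hSB.trans Finset.subset_union_right) h2
  have hs : f Sv ≤ f (Sv ∩ B) := hSvmin _ h1
  have hsubm := hsub Sv B
  have heq : f (Sv ∩ B) = f Sv := by linarith
  by_contra hnot
  have hss : Sv ∩ B ⊂ Sv := by
    refine Finset.ssubset_iff_subset_ne.2 ⟨Finset.inter_subset_left, ?_⟩
    intro h
    exact hnot (Finset.inter_eq_left.mp h)
  exact hSvminimal _ hss h1 heq
end

section
/- Let V be a finite set, f : 2^V → ℝ a symmetric submodular function, R ⊆ V, and let (S, T) be a partition of R (S ∪ T = R, S ∩ T = ∅) with v ∈ T. Let B ⊆ V satisfy S ⊆ B, B ∩ T = ∅, and f(B) ≤ f(B') for every B' ⊆ V with S ⊆ B' and B' ∩ T = ∅. Let S_v ⊆ V satisfy S_v ∩ R = {v}, f(S_v) ≤ f(A) for every A ⊆ V with A ∩ R = {v}, and suppose S_v is inclusion-wise minimal among all such minimizers. Then S_v ⊆ V \ B, i.e., S_v ∩ B = ∅. -/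
/-- If `(S, T)` is a partition of `R` with `v ∈ T`, `B` is a minimizer of a
symmetric submodular function `f` among sets containing `S` and disjoint
from `T`, and `S_v` is a minimum `v`-isolating set (inclusion-wise minimal
among minimizers), then `S_v ⊆ V \ B`, i.e. `S_v ∩ B = ∅`. -/
theorem stmt_3 {V : Type*} [Fintype V] [DecidableEq V]
    (f : Finset V → ℝ)
    (hsub : ∀ A B : Finset V, f A + f B ≥ f (A ∪ B) + f (A ∩ B))
    (hsym : ∀ A : Finset V, f A = f Aᶜ)
    (R S T : Finset V) (hpart : S ∪ T = R) (hdisj : S ∩ T = ∅)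
    (v : V) (hv : v ∈ T)
    (B : Finset V) (hSB : S ⊆ B) (hBT : B ∩ T = ∅)
    (hBmin : ∀ B' : Finset V, S ⊆ B' → B' ∩ T = ∅ → f B ≤ f B')
    (Sv : Finset V) (hSvR : Sv ∩ R = {v})
    (hSvmin : ∀ A : Finset V, A ∩ R = {v} → f Sv ≤ f A)
    (hSvminimal : ∀ A : Finset V, A ⊂ Sv → A ∩ R = {v} → f A ≠ f Sv) :
    Sv ∩ B = ∅ := by
  -- basic membership facts
  have hvB : v ∉ B := by
    intro h
    have : v ∈ B ∩ T := Finset.mem_inter.2 ⟨h, hv⟩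
    simp [hBT] at this
  have hvR : v ∈ R := by rw [← hpart]; exact Finset.mem_union_right _ hv
  -- (Sv ∩ Bᶜ) ∩ R = {v}
  have hA : (Sv ∩ Bᶜ) ∩ R = {v} := by
    ext x
    simp only [Finset.mem_inter, Finset.mem_compl, Finset.mem_singleton]
    constructor
    · rintro ⟨⟨hxSv, hxB⟩, hxR⟩
      have : x ∈ Sv ∩ R := Finset.mem_inter.2 ⟨hxSv, hxR⟩
      rw [hSvR] at this; exact Finset.mem_singleton.1 this
    · intro hxv
      have hvSv : v ∈ Sv := by
        have : v ∈ Sv ∩ R := by rw [hSvR]; exact Finset.mem_singleton_self v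
        exact (Finset.mem_inter.1 this).1
      subst hxv
      exact ⟨⟨hvSv, hvB⟩, hvR⟩
  -- S ⊆ B \ Sv
  have hSvS : ∀ x ∈ S, x ∉ Sv := by
    intro x hxS hxSv
    have hxR : x ∈ R := by rw [← hpart]; exact Finset.mem_union_left _ hxS
    have : x ∈ Sv ∩ R := Finset.mem_inter.2 ⟨hxSv, hxR⟩
    rw [hSvR, Finset.mem_singleton] at this
    subst this
    have : x ∈ S ∩ T := Finset.mem_inter.2 ⟨hxS, hv⟩
    simp [hdisj] at this
  have hSB' : S ⊆ B \ Sv := fun x hx =>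
    Finset.mem_sdiff.2 ⟨hSB hx, hSvS x hx⟩
  have hB'T : (B \ Sv) ∩ T = ∅ := by
    apply Finset.eq_empty_of_forall_notMem
    intro x hx
    simp only [Finset.mem_inter, Finset.mem_sdiff] at hx
    have : x ∈ B ∩ T := Finset.mem_inter.2 ⟨hx.1.1, hx.2⟩
    simp [hBT] at this
  -- complement identity
  have hcompl : (Sv ∪ Bᶜ)ᶜ = B \ Sv := by
    ext x; simp [Finset.mem_sdiff, Finset.mem_compl, and_comm, not_or]
  have h1 : f B ≤ f (Sv ∪ Bᶜ) := by
    have := hBmin (B \ Sv) hSB' hB'T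
    rw [hsym (Sv ∪ Bᶜ), hcompl]; exact this
  have h2 : f Sv ≤ f (Sv ∩ Bᶜ) := hSvmin _ hA
  have hsubm := hsub Sv Bᶜ
  rw [← hsym B] at hsubm
  -- conclude f (Sv ∩ Bᶜ) = f Sv
  have heq : f (Sv ∩ Bᶜ) = f Sv := by linarith
  -- minimality: Sv ∩ Bᶜ is not a strict subset of Sv
  have hsubset : Sv ∩ Bᶜ ⊆ Sv := Finset.inter_subset_left
  have hnot : ¬ (Sv ∩ Bᶜ ⊂ Sv) := fun h => hSvminimal _ h hA heq
  have hEq : Sv ∩ Bᶜ = Sv := by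
    rcases eq_or_ne (Sv ∩ Bᶜ) Sv with h | h
    · exact h
    · exact absurd (hsubset.ssubset_of_ne h) hnot
  -- hence Sv ⊆ Bᶜ, so Sv ∩ B = ∅
  apply Finset.eq_empty_of_forall_notMem
  intro x hx
  rw [Finset.mem_inter] at hx
  have : x ∈ Sv ∩ Bᶜ := hEq.symm ▸ hx.1
  rw [Finset.mem_inter, Finset.mem_compl] at this
  exact this.2 hx.2
end

section
/- Let V be a finite set, f : 2^V → ℝ a symmetric submodular function, and R ⊆ V with at least two elements. For each w ∈ R let S_w ⊆ V satisfy S_w ∩ R = {w}, f(S_w) ≤ f(A) for every A ⊆ V with A ∩ R = {w}, with S_w inclusion-wise minimal among such minimizers. Then for any two distinct u, v ∈ R, the sets S_u and S_v are disjoint: S_u ∩ S_v = ∅. -/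
/-- Minimum isolating sets for distinct elements of `R` (each inclusion-wise
minimal among the minimizers) are pairwise disjoint. -/
theorem stmt_4 {V : Type*} [Fintype V] [DecidableEq V]
    (f : Finset V → ℝ)
    (hsub : ∀ A B : Finset V, f A + f B ≥ f (A ∪ B) + f (A ∩ B))
    (hsym : ∀ A : Finset V, f A = f Aᶜ)
    (R : Finset V) (hR : 2 ≤ R.card)
    (Sw : V → Finset V)
    (hiso : ∀ w ∈ R, Sw w ∩ R = {w})
    (hmin : ∀ w ∈ R, ∀ A : Finset V, A ∩ R = {w} → f (Sw w) ≤ f A)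
    (hminimal : ∀ w ∈ R, ∀ A : Finset V, A ⊂ Sw w → A ∩ R = {w} → f A ≠ f (Sw w)) :
    ∀ u ∈ R, ∀ v ∈ R, u ≠ v → Sw u ∩ Sw v = ∅ := by
  intro u hu v hv huv
  by_contra hne
  have hu' : ∀ x, x ∈ Sw u → x ∈ R → x = u := by
    intro x h1 h2
    have hx : x ∈ Sw u ∩ R := Finset.mem_inter.mpr ⟨h1, h2⟩
    rw [hiso u hu] at hx; simpa using hx
  have hv' : ∀ x, x ∈ Sw v → x ∈ R → x = v := by
    intro x h1 h2
    have hx : x ∈ Sw v ∩ R := Finset.mem_inter.mpr ⟨h1, h2⟩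
    rw [hiso v hv] at hx; simpa using hx
  have huSu : u ∈ Sw u := by
    have : u ∈ Sw u ∩ R := by rw [hiso u hu]; simp
    exact (Finset.mem_inter.mp this).1
  have hvSv : v ∈ Sw v := by
    have : v ∈ Sw v ∩ R := by rw [hiso v hv]; simp
    exact (Finset.mem_inter.mp this).1
  have hIu : (Sw u \ Sw v) ∩ R = {u} := by
    ext x
    simp only [Finset.mem_inter, Finset.mem_sdiff, Finset.mem_singleton]
    constructor
    · rintro ⟨⟨h1, _⟩, h3⟩; exact hu' x h1 h3
    · rintro rfl
      exact ⟨⟨huSu, fun h => huv (hv' _ h hu)⟩, hu⟩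
  have hIv : (Sw v \ Sw u) ∩ R = {v} := by
    ext x
    simp only [Finset.mem_inter, Finset.mem_sdiff, Finset.mem_singleton]
    constructor
    · rintro ⟨⟨h1, _⟩, h3⟩; exact hv' x h1 h3
    · rintro rfl
      exact ⟨⟨hvSv, fun h => huv (hu' _ h hv).symm⟩, hv⟩
  -- uncrossing
  have key := hsub (Sw u) (Sw v)ᶜ
  have e1 : Sw u ∩ (Sw v)ᶜ = Sw u \ Sw v := by
    ext x; simp [Finset.mem_sdiff, Finset.mem_compl]
  have e2 : Sw u ∪ (Sw v)ᶜ = (Sw v \ Sw u)ᶜ := by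
    ext x; simp [Finset.mem_sdiff, Finset.mem_compl]; tauto
  rw [e1, e2, ← hsym (Sw v \ Sw u), ← hsym (Sw v)] at key
  have hA := hmin u hu (Sw u \ Sw v) hIu
  have hB := hmin v hv (Sw v \ Sw u) hIv
  have heq : f (Sw u \ Sw v) = f (Sw u) := by linarith
  have hss : Sw u \ Sw v ⊂ Sw u := by
    obtain ⟨x, hx⟩ := Finset.nonempty_iff_ne_empty.mpr hne
    obtain ⟨hx1, hx2⟩ := Finset.mem_inter.mp hx
    refine Finset.ssubset_iff_of_subset Finset.sdiff_subset |>.mpr ⟨x, hx1, by simp [hx2]⟩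
  exact hminimal u hu _ hss hIu heq
end

section
/- Isolating set lemma (structural form). Let V be a finite set, f : 2^V → ℝ a symmetric submodular function, and R ⊆ V. Let (S_i, T_i)_{i ∈ I} be a finite family of partitions of R (S_i ∪ T_i = R, S_i ∩ T_i = ∅) such that for every pair of distinct u, v ∈ R there is an i ∈ I with exactly one of u, v in S_i. For each i, let B_i ⊆ V satisfy S_i ⊆ B_i, B_i ∩ T_i = ∅, and f(B_i) ≤ f(B') for every B' with S_i ⊆ B' ⊆ V \ T_i. For v ∈ R set C_i(v) = B_i if v ∈ B_i and C_i(v) = V \ B_i otherwise, and U_v = ⋂_{i ∈ I} C_i(v). For each v ∈ R let S_v be a minimum isolating set for v with respect to R. Then: (1) S_v ⊆ U_v for every v ∈ R; (2) the sets (U_v)_{v ∈ R} are pairwise disjoint and ∑_{v ∈ R} |U_v| ≤ |V|. -/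
/-- Isolating set lemma (structural form). Given a family of partitions
`(S_i, T_i)` of `R` separating all pairs of distinct elements of `R`, and for
each `i` a minimizer `B_i` of the symmetric submodular function `f` among sets
containing `S_i` and disjoint from `T_i`, set `C_i(v) = B_i` if `v ∈ B_i` and
`C_i(v) = V \ B_i` otherwise, and `U_v = ⋂ i, C_i(v)`. Then every minimum
isolating set `S_v` satisfies `S_v ⊆ U_v`, the `U_v` for `v ∈ R` are pairwise
disjoint, and `∑_{v ∈ R} |U_v| ≤ |V|`. -/
theorem stmt_6 {V : Type*} [Fintype V] [DecidableEq V]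
    (f : Finset V → ℝ)
    (hsub : ∀ A B : Finset V, f A + f B ≥ f (A ∪ B) + f (A ∩ B))
    (hsym : ∀ A : Finset V, f A = f Aᶜ)
    (R : Finset V) {I : Type*} [Fintype I]
    (S T : I → Finset V)
    (hpart : ∀ i : I, S i ∪ T i = R) (hdisj : ∀ i : I, S i ∩ T i = ∅)
    (hsep : ∀ u ∈ R, ∀ v ∈ R, u ≠ v → ∃ i : I, Xor' (u ∈ S i) (v ∈ S i))
    (B : I → Finset V)
    (hSB : ∀ i : I, S i ⊆ B i) (hBT : ∀ i : I, B i ∩ T i = ∅)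
    (hBmin : ∀ i : I, ∀ B' : Finset V, S i ⊆ B' → B' ⊆ (T i)ᶜ → f (B i) ≤ f B')
    (U : V → Finset V)
    (hU : ∀ v : V, U v = Finset.univ.inf (fun i : I => if v ∈ B i then B i else (B i)ᶜ))
    (Sv : V → Finset V)
    (hiso : ∀ v ∈ R, Sv v ∩ R = {v})
    (hmin : ∀ v ∈ R, ∀ A : Finset V, A ∩ R = {v} → f (Sv v) ≤ f A)
    (hminimal : ∀ v ∈ R, ∀ A : Finset V, A ⊂ Sv v → A ∩ R = {v} → f A ≠ f (Sv v)) :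
    (∀ v ∈ R, Sv v ⊆ U v) ∧
      (∀ u ∈ R, ∀ v ∈ R, u ≠ v → Disjoint (U u) (U v)) ∧
      ∑ v ∈ R, (U v).card ≤ Fintype.card V := by

  classical
  have hTR : ∀ i, T i ⊆ R := fun i => (hpart i) ▸ Finset.subset_union_right
  have hSR : ∀ i, S i ⊆ R := fun i => (hpart i) ▸ Finset.subset_union_left
  -- key: Sv v ⊆ C_i(v)
  have key : ∀ v ∈ R, ∀ i : I, Sv v ⊆ (if v ∈ B i then B i else (B i)ᶜ) := by
    intro v hv i
    have hvSv : v ∈ Sv v := by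
      have h := hiso v hv
      have : v ∈ Sv v ∩ R := h ▸ Finset.mem_singleton_self v
      exact (Finset.mem_inter.mp this).1
    set A := Sv v with hA
    by_cases hvB : v ∈ B i
    · simp only [if_pos hvB]
      -- A ∩ T i = ∅
      have hAT : ∀ x ∈ A, x ∉ T i := by
        intro x hx hxT
        have hxR : x ∈ R := hTR i hxT
        have hxv : x = v := by
          have : x ∈ Sv v ∩ R := Finset.mem_inter.mpr ⟨hx, hxR⟩
          rw [hiso v hv] at this
          exact Finset.mem_singleton.mp this
        subst hxv
        have : x ∈ B i ∩ T i := Finset.mem_inter.mpr ⟨hvB, hxT⟩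
        rw [hBT i] at this
        exact absurd this (Finset.notMem_empty x)
      have hiso2 : (A ∩ B i) ∩ R = {v} := by
        apply Finset.Subset.antisymm
        · intro x hx
          simp only [Finset.mem_inter] at hx
          have : x ∈ Sv v ∩ R := Finset.mem_inter.mpr ⟨hx.1.1, hx.2⟩
          rw [hiso v hv] at this
          exact this
        · intro x hx
          rw [Finset.mem_singleton] at hx
          subst hx
          exact Finset.mem_inter.mpr ⟨Finset.mem_inter.mpr ⟨hvSv, hvB⟩, hv⟩
      have hle : f (B i) ≤ f (A ∪ B i) := by
        apply hBmin i
        · exact (hSB i).trans Finset.subset_union_right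
        · intro x hx
          rw [Finset.mem_compl]
          rcases Finset.mem_union.mp hx with h | h
          · exact hAT x h
          · intro hxT
            have : x ∈ B i ∩ T i := Finset.mem_inter.mpr ⟨h, hxT⟩
            rw [hBT i] at this
            exact absurd this (Finset.notMem_empty x)
      have hsubm := hsub A (B i)
      have h1 : f (A ∩ B i) ≤ f A := by linarith
      have h2 : f A ≤ f (A ∩ B i) := hmin v hv _ hiso2
      have heq : f (A ∩ B i) = f A := le_antisymm h1 h2
      have hsubset : A ∩ B i ⊆ A := Finset.inter_subset_left
      rcases hsubset.eq_or_ssubset with h | h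
      · exact Finset.inter_eq_left.mp h
      · exact absurd heq (hminimal v hv _ h hiso2)
    · simp only [if_neg hvB]
      have hvD : v ∈ (B i)ᶜ := Finset.mem_compl.mpr hvB
      -- A ∩ S i = ∅
      have hAS : ∀ x ∈ A, x ∉ S i := by
        intro x hx hxS
        have hxR : x ∈ R := hSR i hxS
        have hxv : x = v := by
          have : x ∈ Sv v ∩ R := Finset.mem_inter.mpr ⟨hx, hxR⟩
          rw [hiso v hv] at this
          exact Finset.mem_singleton.mp this
        subst hxv
        exact hvB (hSB i hxS)
      have hiso2 : (A ∩ (B i)ᶜ) ∩ R = {v} := by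
        apply Finset.Subset.antisymm
        · intro x hx
          simp only [Finset.mem_inter] at hx
          have : x ∈ Sv v ∩ R := Finset.mem_inter.mpr ⟨hx.1.1, hx.2⟩
          rw [hiso v hv] at this
          exact this
        · intro x hx
          rw [Finset.mem_singleton] at hx
          subst hx
          exact Finset.mem_inter.mpr ⟨Finset.mem_inter.mpr ⟨hvSv, hvD⟩, hv⟩
      have hcompl : (A ∪ (B i)ᶜ)ᶜ = Aᶜ ∩ B i := by
        ext x
        simp [Finset.mem_compl, Finset.mem_union, Finset.mem_inter, not_or]
      have hle : f (B i) ≤ f (A ∪ (B i)ᶜ) := by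
        have hle' : f (B i) ≤ f (Aᶜ ∩ B i) := by
          apply hBmin i
          · intro x hxS
            exact Finset.mem_inter.mpr ⟨Finset.mem_compl.mpr (fun hxA => hAS x hxA hxS), hSB i hxS⟩
          · intro x hx
            rw [Finset.mem_compl]
            intro hxT
            have : x ∈ B i ∩ T i := Finset.mem_inter.mpr ⟨(Finset.mem_inter.mp hx).2, hxT⟩
            rw [hBT i] at this
            exact absurd this (Finset.notMem_empty x)
        rw [hsym (A ∪ (B i)ᶜ), hcompl]
        exact hle'
      have hsubm := hsub A ((B i)ᶜ)
      have hfD : f ((B i)ᶜ) = f (B i) := (hsym (B i)).symm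
      have h1 : f (A ∩ (B i)ᶜ) ≤ f A := by linarith
      have h2 : f A ≤ f (A ∩ (B i)ᶜ) := hmin v hv _ hiso2
      have heq : f (A ∩ (B i)ᶜ) = f A := le_antisymm h1 h2
      have hsubset : A ∩ (B i)ᶜ ⊆ A := Finset.inter_subset_left
      rcases hsubset.eq_or_ssubset with h | h
      · exact Finset.inter_eq_left.mp h
      · exact absurd heq (hminimal v hv _ h hiso2)
  have hUsub : ∀ v : V, ∀ i : I, U v ⊆ (if v ∈ B i then B i else (B i)ᶜ) := by
    intro v i
    rw [hU]
    exact Finset.le_iff_subset.mp (Finset.inf_le (Finset.mem_univ i))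
  have hdisjU : ∀ u ∈ R, ∀ v ∈ R, u ≠ v → Disjoint (U u) (U v) := by
    intro u hu v hv huv
    obtain ⟨i, hxor⟩ := hsep u hu v hv huv
    have mem_of_R : ∀ w ∈ R, w ∉ S i → w ∉ B i := by
      intro w hw hwS hwB
      have hwT : w ∈ T i := by
        have : w ∈ S i ∪ T i := (hpart i) ▸ hw
        rcases Finset.mem_union.mp this with h | h
        · exact absurd h hwS
        · exact h
      have : w ∈ B i ∩ T i := Finset.mem_inter.mpr ⟨hwB, hwT⟩
      rw [hBT i] at this
      exact absurd this (Finset.notMem_empty w)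
    rcases hxor with ⟨huS, hvS⟩ | ⟨hvS, huS⟩
    · have huB : u ∈ B i := hSB i huS
      have hvB : v ∉ B i := mem_of_R v hv hvS
      have h1 : U u ⊆ B i := by have := hUsub u i; rwa [if_pos huB] at this
      have h2 : U v ⊆ (B i)ᶜ := by have := hUsub v i; rwa [if_neg hvB] at this
      exact Finset.disjoint_left.mpr fun a ha hb => Finset.mem_compl.mp (h2 hb) (h1 ha)
    · have hvB : v ∈ B i := hSB i hvS
      have huB : u ∉ B i := mem_of_R u hu huS
      have h1 : U u ⊆ (B i)ᶜ := by have := hUsub u i; rwa [if_neg huB] at this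
      have h2 : U v ⊆ B i := by have := hUsub v i; rwa [if_pos hvB] at this
      exact Finset.disjoint_left.mpr fun a ha hb => Finset.mem_compl.mp (h1 ha) (h2 hb)
  refine ⟨?_, hdisjU, ?_⟩
  · intro v hv
    rw [hU]
    exact Finset.le_iff_subset.mp (Finset.le_inf fun i _ => Finset.le_iff_subset.mpr (key v hv i))
  · have hcard : ∑ v ∈ R, (U v).card = (R.biUnion U).card :=
      (Finset.card_biUnion (fun x hx y hy hxy => hdisjU x hx y hy hxy)).symm
    rw [hcard]
    calc (R.biUnion U).card ≤ (Finset.univ : Finset V).card :=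
          Finset.card_le_card (Finset.subset_univ _)
      _ = Fintype.card V := Finset.card_univ
end

section
/- Let V be a finite set of size n, let M ⊆ V be nonempty with |M| = k' and 2k' ≤ n, and let k be a real number with k ≥ 2, 2k ≤ 3k', and 2k' ≤ 3k. Form a random subset R ⊆ V by including each element of V independently with probability 1/k. Then the probability that simultaneously |R ∩ M| = 1 and R \ M ≠ ∅ is at least (2/3)·e^{−2}·(1 − e^{−1/3}). -/
/-! Splitting `R` into `R ∩ M` and `R \ M` factors the sum into the probability
`k' (1/k) q^(k'-1)` of hitting `M` exactly once and the probability `1 - q^(n-k')` of meeting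
`V \ M`, where `q = 1 - 1/k`. Since `e^(-1/(k-1)) ≤ q ≤ e^(-1/k)`, the first factor is at least
`(2/3) e^(-(k'-1)/(k-1)) ≥ (2/3) e^(-2)`, and as `n - k' ≥ k' ≥ 2k/3` the second is at least
`1 - e^(-1/3)`. -/

open Finset Real

section Combinatorics

variable {α : Type*} [Fintype α] [DecidableEq α]

theorem Finset.sum_univ_eq_sum_powerset_inter_sdiff {β : Type*} [AddCommMonoid β]
    (M : Finset α) (F : Finset α → Finset α → β) :
    ∑ R, F (R ∩ M) (R \ M) = ∑ A ∈ M.powerset, ∑ B ∈ Mᶜ.powerset, F A B := by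
  rw [← sum_product']
  refine sum_nbij' (fun R ↦ (R ∩ M, R \ M)) (fun AB ↦ AB.1 ∪ AB.2) ?_ ?_ ?_ ?_ ?_
  · intro R _
    simp only [mem_product, mem_powerset]
    exact ⟨inter_subset_right, fun x hx ↦ by simp_all⟩
  · simp
  · intro R _
    exact (union_comm _ _).trans (sdiff_union_inter R M)
  · rintro ⟨A, B⟩ h
    simp only [mem_product, mem_powerset, subset_compl_iff_disjoint_right] at h
    obtain ⟨hA, hB⟩ := h
    rw [union_inter_distrib_right, inter_eq_left.mpr hA, disjoint_iff_inter_eq_empty.mp hB,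
      union_empty, union_sdiff_distrib, sdiff_eq_empty_iff_subset.mpr hA, hB.sdiff_eq_left,
      empty_union]
  · simp

theorem pow_card_mul_pow_card_compl_eq {R : Type*} [CommMonoid R] (p q : R) (S M : Finset α) :
    p ^ #S * q ^ #Sᶜ
      = (p ^ #(S ∩ M) * q ^ (#M - #(S ∩ M))) * (p ^ #(S \ M) * q ^ (#Mᶜ - #(S \ M))) := by
  have hS : #(S \ M) + #(S ∩ M) = #S := card_sdiff_add_card_inter S M
  have hM : #(S ∩ M) ≤ #M := card_le_card inter_subset_right
  have hMc : #(S \ M) ≤ #Mᶜ := card_le_card fun x hx ↦ by simp_all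
  have hSc : #Sᶜ = (#M - #(S ∩ M)) + (#Mᶜ - #(S \ M)) := by
    have := card_add_card_compl S
    have := card_add_card_compl M
    omega
  rw [← hS, hSc]
  simp only [pow_add]
  ac_rfl

end Combinatorics

section Binomial

variable {α : Type*} {R : Type*} [CommRing R]

theorem Finset.sum_powerset_card_eq_one_pow_mul_pow (S : Finset α) (p q : R) :
    ∑ A ∈ S.powerset, (if #A = 1 then p ^ #A * q ^ (#S - #A) else 0)
      = #S * (p * q ^ (#S - 1)) := by
  rw [← sum_filter, ← powersetCard_eq_filter,
    sum_congr rfl fun A hA ↦ by rw [(mem_powersetCard.mp hA).2, pow_one],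
    sum_const, card_powersetCard, Nat.choose_one_right, nsmul_eq_mul]

theorem Finset.sum_powerset_nonempty_pow_mul_pow [DecidableEq α] (S : Finset α) {p q : R}
    (hpq : p + q = 1) :
    ∑ A ∈ S.powerset, (if A.Nonempty then p ^ #A * q ^ (#S - #A) else 0) = 1 - q ^ #S := by
  simp_rw [nonempty_iff_ne_empty]
  rw [← sum_filter, filter_ne', sum_erase_eq_sub (empty_mem_powerset S),
    sum_pow_mul_eq_add_pow, hpq]
  simp

end Binomial

theorem Real.exp_neg_one_div_sub_one_le {k : ℝ} (hk : 1 < k) :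
    exp (-(1 / (k - 1))) ≤ 1 - 1 / k := by
  have hk1 : 0 < k - 1 := by linarith
  have key : 1 - 1 / k = (1 + 1 / (k - 1))⁻¹ := by field_simp; ring
  rw [key, exp_neg, inv_le_inv₀ (exp_pos _) (by positivity)]
  linarith [add_one_le_exp (1 / (k - 1))]

theorem two_thirds_mul_exp_neg_two_le {k : ℝ} {c : ℕ} (hk : 2 ≤ k)
    (h1 : 2 * k ≤ 3 * (c : ℝ)) (h2 : 2 * (c : ℝ) ≤ 3 * k) :
    2 / 3 * exp (-2) ≤ c * (1 / k * (1 - 1 / k) ^ (c - 1)) := by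
  have hk0 : 0 < k := by linarith
  have hc : 1 ≤ c := by exact_mod_cast (by linarith : (1 : ℝ) ≤ c)
  have hmean : 2 / 3 ≤ c * (1 / k) := by
    rw [mul_one_div, le_div_iff₀ hk0]
    linarith
  have hpow : exp (-2) ≤ (1 - 1 / k) ^ (c - 1) :=
    calc exp (-2) ≤ exp (-(1 / (k - 1))) ^ (c - 1) := by
          rw [← exp_nat_mul, exp_le_exp, Nat.cast_sub hc, Nat.cast_one, mul_neg, neg_le_neg_iff,
            mul_one_div, div_le_iff₀ (by linarith)]
          linarith
      _ ≤ (1 - 1 / k) ^ (c - 1) :=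
          pow_le_pow_left₀ (exp_pos _).le (exp_neg_one_div_sub_one_le (by linarith)) _
  calc 2 / 3 * exp (-2) ≤ c * (1 / k) * (1 - 1 / k) ^ (c - 1) :=
        mul_le_mul hmean hpow (exp_pos _).le (by positivity)
    _ = c * (1 / k * (1 - 1 / k) ^ (c - 1)) := by ring

theorem one_sub_one_div_pow_le_exp_neg_third {k : ℝ} {m : ℕ} (hk : 1 ≤ k)
    (hm : k ≤ 3 * (m : ℝ)) : (1 - 1 / k) ^ m ≤ exp (-(1 / 3)) :=
  calc (1 - 1 / k) ^ m ≤ exp (-(1 / k)) ^ m :=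
        pow_le_pow_left₀ (by rw [sub_nonneg, div_le_one (by linarith)]; exact hk)
          (one_sub_le_exp_neg _) _
    _ = exp (m * -(1 / k)) := (exp_nat_mul _ _).symm
    _ ≤ exp (-(1 / 3)) := by
        rw [exp_le_exp, mul_neg, neg_le_neg_iff, mul_one_div, div_le_div_iff₀ (by norm_num)
          (by linarith)]
        linarith

theorem stmt_10_general {V : Type*} [Fintype V] [DecidableEq V]
    (M : Finset V) (hMhalf : 2 * M.card ≤ Fintype.card V)
    (k : ℝ) (hk : 2 ≤ k)
    (h1 : 2 * k ≤ 3 * (M.card : ℝ)) (h2 : 2 * (M.card : ℝ) ≤ 3 * k) :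
    (∑ R : Finset V,
        if (R ∩ M).card = 1 ∧ (R \ M).Nonempty then
          (1 / k) ^ R.card * (1 - 1 / k) ^ Rᶜ.card
        else 0)
      ≥ 2 / 3 * Real.exp (-2) * (1 - Real.exp (-(1 / 3))) := by
  have hMc : (#M : ℝ) ≤ #Mᶜ := by
    have := card_add_card_compl M
    exact_mod_cast (by omega : #M ≤ #Mᶜ)
  have hsingle := two_thirds_mul_exp_neg_two_le hk h1 h2
  have hrest : (1 - 1 / k) ^ #Mᶜ ≤ exp (-(1 / 3)) :=
    one_sub_one_div_pow_le_exp_neg_third (by linarith) (by linarith)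
  simp_rw [pow_card_mul_pow_card_compl_eq (1 / k) (1 - 1 / k) _ M, ← ite_zero_mul_ite_zero]
  rw [sum_univ_eq_sum_powerset_inter_sdiff M fun A B ↦
      (if #A = 1 then (1 / k) ^ #A * (1 - 1 / k) ^ (#M - #A) else 0) *
      (if B.Nonempty then (1 / k) ^ #B * (1 - 1 / k) ^ (#Mᶜ - #B) else 0),
    ← sum_mul_sum, sum_powerset_card_eq_one_pow_mul_pow,
    sum_powerset_nonempty_pow_mul_pow _ (add_sub_cancel _ _)]
  have hexp : exp (-(1 / 3)) ≤ 1 := exp_le_one_iff.mpr (by norm_num)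
  exact mul_le_mul hsingle (by linarith) (by linarith)
    ((by positivity : (0 : ℝ) ≤ 2 / 3 * exp (-2)).trans hsingle)

/-- Form a random subset `R` of a finite set `V` by including each element
independently with probability `1/k` (so a fixed set `R` has probability
`(1/k)^|R| · (1 − 1/k)^(|V| − |R|)`). If `M ⊆ V` is nonempty with
`2|M| ≤ |V|` and `k ≥ 2` is a `1.5`-approximation of `|M|`, then the
probability that simultaneously `|R ∩ M| = 1` and `R \ M ≠ ∅` is at least
`(2/3) · e⁻² · (1 − e^(−1/3))`. -/
theorem stmt_10 {V : Type*} [Fintype V] [DecidableEq V]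
    (M : Finset V) (hM : M.Nonempty) (hMhalf : 2 * M.card ≤ Fintype.card V)
    (k : ℝ) (hk : 2 ≤ k)
    (h1 : 2 * k ≤ 3 * (M.card : ℝ)) (h2 : 2 * (M.card : ℝ) ≤ 3 * k) :
    (∑ R : Finset V,
        if (R ∩ M).card = 1 ∧ (R \ M).Nonempty then
          (1 / k) ^ R.card * (1 - 1 / k) ^ Rᶜ.card
        else 0)
      ≥ 2 / 3 * Real.exp (-2) * (1 - Real.exp (-(1 / 3))) :=
  stmt_10_general M hMhalf k hk h1 h2
end
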